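/- arXiv:2307.07206 — 2 statements merged into one kernel-verified Lean document; each statement's English description precedes it below -/
import Mathlib

section
/- Let z be a nonzero complex number with arg z = φ ∈ [π − θ, θ] for some θ ∈ (π/2, π). Then for all nonnegative reals γ, β one has 2·|zγ + β| ≥ (|z|·γ + β)·sin θ. -/
/-!
Put `w = z * γ + β` and `φ = arg z`. The imaginary part of `w` is `‖z‖ * γ * sin φ`, and the
component of `w` orthogonal to `z` has length `β * |sin φ|`; each is bounded by `‖w‖`, so
`(‖z‖ * γ + β) * sin φ ≤ 2 * ‖w‖`. Finally `sin θ ≤ sin φ`, since `sin` is concave on `[0, π]`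
and takes the value `sin θ` at both ends of `[π - θ, θ]`.
-/

open Real ComplexConjugate

theorem Real.sin_le_sin_of_mem_Icc_pi_sub {θ φ : ℝ} (hθ : θ ≤ π) (hφ : φ ∈ Set.Icc (π - θ) θ) :
    sin θ ≤ sin φ := by
  have hθ₀ : 0 ≤ π - θ := sub_nonneg.2 hθ
  have := strictConcaveOn_sin_Icc.concaveOn.min_le_of_mem_Icc
    ⟨hθ₀, sub_le_self π (hθ₀.trans (hφ.1.trans hφ.2))⟩ ⟨hθ₀.trans (hφ.1.trans hφ.2), hθ⟩ hφ
  rwa [sin_pi_sub, min_self] at this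

namespace Complex

theorem mul_im_le_norm_mul_ofReal_add_ofReal (z : ℂ) (γ β : ℝ) :
    γ * z.im ≤ ‖z * γ + β‖ := by
  simpa [mul_comm] using im_le_norm (z * γ + β)

theorem abs_mul_im_le_norm_mul_norm_mul_ofReal_add_ofReal (z : ℂ) (γ β : ℝ) :
    |β * z.im| ≤ ‖z‖ * ‖z * γ + β‖ := by
  have him : (conj z * (z * γ + β)).im = -(β * z.im) := by
    simp only [mul_im, add_im, add_re, mul_re, conj_re, conj_im, ofReal_re, ofReal_im]
    ring
  calc |β * z.im| = |(conj z * (z * γ + β)).im| := by rw [him, abs_neg]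
    _ ≤ ‖conj z * (z * γ + β)‖ := abs_im_le_norm _
    _ = ‖z‖ * ‖z * γ + β‖ := by rw [norm_mul, norm_conj]

theorem mul_sin_arg_le_norm_mul_ofReal_add_ofReal (z : ℂ) (γ β : ℝ) :
    β * Real.sin (arg z) ≤ ‖z * γ + β‖ := by
  rcases eq_or_ne z 0 with rfl | hz
  · simp
  refine le_of_mul_le_mul_left ?_ (norm_pos_iff.2 hz)
  calc ‖z‖ * (β * Real.sin (arg z)) = β * z.im := by rw [← norm_mul_sin_arg]; ring
    _ ≤ |β * z.im| := le_abs_self _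
    _ ≤ ‖z‖ * ‖z * γ + β‖ := abs_mul_im_le_norm_mul_norm_mul_ofReal_add_ofReal z γ β

end Complex

theorem stmt2_general (θ : ℝ) (hθ : θ ∈ Set.Ioo (Real.pi / 2) Real.pi)
    (z : ℂ) (φ : ℝ) (hφ : z.arg = φ)
    (hφ2 : φ ∈ Set.Icc (Real.pi - θ) θ) (γ β : ℝ) (hγ : 0 ≤ γ) (hβ : 0 ≤ β) :
    (‖z‖ * γ + β) * Real.sin θ ≤ 2 * ‖z * (γ : ℂ) + (β : ℂ)‖ := by
  subst hφ
  have hsin : sin θ ≤ sin z.arg := sin_le_sin_of_mem_Icc_pi_sub hθ.2.le hφ2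
  have him := Complex.mul_im_le_norm_mul_ofReal_add_ofReal z γ β
  have horth := Complex.mul_sin_arg_le_norm_mul_ofReal_add_ofReal z γ β
  rw [← Complex.norm_mul_sin_arg] at him
  calc (‖z‖ * γ + β) * sin θ ≤ (‖z‖ * γ + β) * sin z.arg := by gcongr
    _ = γ * (‖z‖ * sin z.arg) + β * sin z.arg := by ring
    _ ≤ 2 * ‖z * γ + β‖ := by linarith

theorem stmt2 (θ : ℝ) (hθ : θ ∈ Set.Ioo (Real.pi / 2) Real.pi)
    (z : ℂ) (hz : z ≠ 0) (φ : ℝ) (hφ : z.arg = φ)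
    (hφ2 : φ ∈ Set.Icc (Real.pi - θ) θ) (γ β : ℝ) (hγ : 0 ≤ γ) (hβ : 0 ≤ β) :
    (‖z‖ * γ + β) * Real.sin θ ≤ 2 * ‖z * (γ : ℂ) + (β : ℂ)‖ :=
  stmt2_general θ hθ z φ hφ hφ2 γ β hγ hβ
end

section
/- Let λ > 0, α ∈ (0,1), and m ≥ 0 an integer. For t > 0, consider the scalar function F^r_λ(t) = (−1)^m/(2πi)·∮ e^{zt}·z^{(1+m)α−1}·(z^α + λ)^{−1}·λ^{−m} dz over a sectorial contour Γ_{θ,κ} with κ = 1/t and θ ∈ (π/2, π/α ∧ π). Then |λ^{m+1}·F^r_λ(t)| ≤ c·t^{−(m+1)α}, with c independent of λ and t. -/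
/-!
Since `α θ < π`, the power `z ^ α` of a point of the sector `|arg z| ≤ θ` lies in the sector
`|arg w| ≤ α θ`, whose distance from `-λ` is at least `λ sin (α θ)`. Hence
`|λ ^ (m + 1) f(z)| ≤ e ^ (t Re z) |z| ^ ((m + 1) α - 1) / sin (α θ)` uniformly in `λ`, and it remains
to integrate this bound over `Γ_{θ, 1/t}`. On the rays `Re z = |z| cos θ` with `cos θ < 0`, so
each ray contributes at most `Γ((m + 1) α) (-t cos θ) ^ (-(m + 1) α)`; on the arc `|z| = 1/t` the bound
is at most `e t ^ (1 - (m + 1) α)` over a length `2 θ / t`. Both scale like `t ^ (-(m + 1) α)`.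
-/

open MeasureTheory Complex Real Set

namespace SectorContour

lemma norm_ofReal_mul_exp_I_mul {ρ : ℝ} (hρ : 0 ≤ ρ) (φ : ℝ) :
    ‖(ρ : ℂ) * exp (I * φ)‖ = ρ := by
  simp [Complex.norm_exp, abs_of_nonneg hρ]

lemma arg_ofReal_mul_exp_I_mul {ρ φ : ℝ} (hρ : 0 < ρ) (hφ : |φ| < π) :
    arg ((ρ : ℂ) * exp (I * φ)) = φ := by
  rw [mul_comm I, exp_mul_I]
  exact arg_mul_cos_add_sin_mul_I hρ ⟨(abs_lt.1 hφ).1, (abs_lt.1 hφ).2.le⟩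

lemma re_ofReal_mul_exp_I_mul (ρ φ : ℝ) : ((ρ : ℂ) * exp (I * φ)).re = ρ * Real.cos φ := by
  rw [mul_comm I, exp_mul_I]
  simp [cos_ofReal_re, sin_ofReal_im]

/-- For `η ≥ π / 2`, `lam * sin η` is the distance from `-lam` to the sector `|arg w| ≤ η`,
which contains `z ^ α`. -/
lemma mul_sin_le_norm_cpow_add {z : ℂ} {α η lam : ℝ} (hlam : 0 ≤ lam) (hη : η ≤ π)
    (hz : |arg z * α| ≤ η) : lam * Real.sin η ≤ ‖z ^ (α : ℂ) + lam‖ := by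
  set r := ‖z‖ ^ α
  set ψ := arg z * α
  have hr : 0 ≤ r := by positivity
  have hcos : Real.cos η ≤ Real.cos ψ := by
    rw [← Real.cos_abs ψ]
    exact Real.cos_le_cos_of_nonneg_of_le_pi (abs_nonneg ψ) hη hz
  have hsq : ‖z ^ (α : ℂ) + lam‖ ^ 2 = (r * Real.cos ψ + lam) ^ 2 + (r * Real.sin ψ) ^ 2 := by
    rw [Complex.sq_norm, normSq_apply, add_re, add_im, cpow_ofReal_re, cpow_ofReal_im]
    simp only [ofReal_re, ofReal_im, add_zero]
    ring
  apply abs_le_of_sq_le_sq' _ (norm_nonneg _) |>.2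
  calc (lam * Real.sin η) ^ 2
      ≤ (r + lam * Real.cos η) ^ 2 + (lam * Real.sin η) ^ 2 := by nlinarith
    _ = r ^ 2 + 2 * lam * r * Real.cos η + lam ^ 2 := by
        linear_combination lam ^ 2 * Real.sin_sq_add_cos_sq η
    _ ≤ r ^ 2 + 2 * lam * r * Real.cos ψ + lam ^ 2 := by
        nlinarith [mul_nonneg hlam hr]
    _ = ‖z ^ (α : ℂ) + lam‖ ^ 2 := by
        rw [hsq]; linear_combination (-r ^ 2) * Real.sin_sq_add_cos_sq ψ

lemma norm_resolvent_integrand_le {α θ t lam : ℝ} (m : ℕ) (hα : 0 < α) (hθ : 0 < θ)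
    (hαθ : α * θ < π) (hlam : 0 < lam) {z : ℂ} (hz : |arg z| ≤ θ) :
    ‖(lam : ℂ) ^ (m + 1) *
      (exp (z * t) * z ^ ((((1 + (m : ℝ)) * α - 1 : ℝ)) : ℂ) *
        (z ^ ((α : ℝ) : ℂ) + (lam : ℂ))⁻¹ * (lam : ℂ) ^ (-(m : ℤ)))‖
      ≤ (Real.sin (α * θ))⁻¹ * (‖z‖ ^ ((1 + (m : ℝ)) * α - 1) * Real.exp (t * z.re)) := by
  have hsin : 0 < Real.sin (α * θ) := Real.sin_pos_of_pos_of_lt_pi (by positivity) hαθ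
  have hres : lam * Real.sin (α * θ) ≤ ‖z ^ (α : ℂ) + lam‖ := by
    refine mul_sin_le_norm_cpow_add hlam.le hαθ.le ?_
    rw [abs_mul, abs_of_pos hα, mul_comm]
    exact mul_le_mul_of_nonneg_left hz hα.le
  have hlam_pow : ‖(lam : ℂ) ^ (m + 1) * (lam : ℂ) ^ (-(m : ℤ))‖ = lam := by
    rw [← zpow_natCast, ← zpow_add₀ (by exact_mod_cast hlam.ne')]
    simp [abs_of_pos hlam]
  have hexp : ‖exp (z * t)‖ = Real.exp (t * z.re) := by
    rw [Complex.norm_exp]; simp [mul_comm]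
  calc _ = ‖(lam : ℂ) ^ (m + 1) * (lam : ℂ) ^ (-(m : ℤ))‖ * ‖z ^ (α : ℂ) + lam‖⁻¹ *
        (‖z ^ ((((1 + (m : ℝ)) * α - 1 : ℝ)) : ℂ)‖ * ‖exp (z * t)‖) := by
        simp only [norm_mul, norm_inv]; ring
    _ ≤ lam * (lam * Real.sin (α * θ))⁻¹ *
        (‖z‖ ^ ((1 + (m : ℝ)) * α - 1) * Real.exp (t * z.re)) := by
        rw [hlam_pow, norm_cpow_real, hexp]
        gcongr
    _ = _ := by field_simp

section Contour

variable {g : ℂ → ℂ} {θ β t M : ℝ}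

lemma norm_integral_ray_le (hβ : 0 < β) (ht : 0 < t) (hM : 0 ≤ M) (hθ : θ < π)
    (hg : ∀ z : ℂ, |arg z| ≤ θ → ‖g z‖ ≤ M * (‖z‖ ^ (β - 1) * Real.exp (t * z.re)))
    {φ : ℝ} (hφ : |φ| ≤ θ) (hcos : Real.cos φ < 0) {κ : ℝ} (hκ : 0 ≤ κ) :
    ‖∫ ρ in Ioi κ, g ((ρ : ℂ) * exp (I * φ)) * exp (I * φ)‖
      ≤ M * ((1 / (-t * Real.cos φ)) ^ β * Real.Gamma β) := by
  set r := -t * Real.cos φ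
  have hr : 0 < r := by nlinarith
  have hint : IntegrableOn (fun ρ : ℝ => ρ ^ (β - 1) * Real.exp (-(r * ρ))) (Ioi 0) := by
    refine (integrableOn_rpow_mul_exp_neg_mul_rpow (p := 1) (s := β - 1) (by linarith) one_pos
      hr).congr_fun (fun ρ _ => ?_) measurableSet_Ioi
    simp only [Real.rpow_one, neg_mul]
  calc _ ≤ ∫ ρ in Ioi κ, M * (ρ ^ (β - 1) * Real.exp (-(r * ρ))) := by
        refine norm_integral_le_of_norm_le ((hint.mono_set (Ioi_subset_Ioi hκ)).const_mul M) ?_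
        filter_upwards [ae_restrict_mem measurableSet_Ioi] with ρ hρ
        have hρ0 : 0 < ρ := hκ.trans_lt hρ
        have hz := hg ((ρ : ℂ) * exp (I * φ))
          (by rwa [arg_ofReal_mul_exp_I_mul hρ0 (hφ.trans_lt hθ)])
        rw [norm_ofReal_mul_exp_I_mul hρ0.le, re_ofReal_mul_exp_I_mul] at hz
        rw [norm_mul, norm_exp_I_mul_ofReal, mul_one]
        convert hz using 4
        ring
    _ ≤ ∫ ρ in Ioi 0, M * (ρ ^ (β - 1) * Real.exp (-(r * ρ))) := by
        refine setIntegral_mono_set (hint.const_mul M) ?_ (ae_of_all _ (Ioi_subset_Ioi hκ))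
        filter_upwards [ae_restrict_mem measurableSet_Ioi] with ρ hρ
        exact mul_nonneg hM (mul_nonneg (Real.rpow_nonneg hρ.out.le _) (Real.exp_nonneg _))
    _ = _ := by rw [integral_const_mul, Real.integral_rpow_mul_exp_neg_mul_Ioi hβ hr]

lemma norm_integral_arc_le (hM : 0 ≤ M) (ht : 0 ≤ t) (hθ0 : 0 ≤ θ) (hθ : θ < π)
    (hg : ∀ z : ℂ, |arg z| ≤ θ → ‖g z‖ ≤ M * (‖z‖ ^ (β - 1) * Real.exp (t * z.re)))
    {κ : ℝ} (hκ : 0 < κ) :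
    ‖∫ φ in (-θ)..θ, g ((κ : ℂ) * exp (I * φ)) * (I * κ * exp (I * φ))‖
      ≤ M * Real.exp (t * κ) * κ ^ β * (2 * θ) := by
  have hbound : ∀ φ ∈ uIoc (-θ) θ, ‖g ((κ : ℂ) * exp (I * φ)) * (I * κ * exp (I * φ))‖
      ≤ M * Real.exp (t * κ) * κ ^ β := by
    intro φ hφ
    rw [uIoc_of_le (by linarith)] at hφ
    have hφθ : |φ| ≤ θ := abs_le.2 ⟨hφ.1.le, hφ.2⟩
    have hz := hg ((κ : ℂ) * exp (I * φ))
      (by rwa [arg_ofReal_mul_exp_I_mul hκ (hφθ.trans_lt hθ)])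
    rw [norm_ofReal_mul_exp_I_mul hκ.le] at hz
    have hre : ((κ : ℂ) * exp (I * φ)).re ≤ κ := by
      rw [re_ofReal_mul_exp_I_mul]; nlinarith [Real.cos_le_one φ]
    calc _ = ‖g ((κ : ℂ) * exp (I * φ))‖ * κ := by
          simp [abs_of_pos hκ]
      _ ≤ M * (κ ^ (β - 1) * Real.exp (t * κ)) * κ := by
          gcongr
          exact hz.trans (by gcongr)
      _ = M * Real.exp (t * κ) * κ ^ β := by
          rw [Real.rpow_sub_one hκ.ne']
          field_simp
  calc _ ≤ M * Real.exp (t * κ) * κ ^ β * |θ - -θ| :=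
        intervalIntegral.norm_integral_le_of_norm_le_const hbound
    _ = _ := by rw [abs_of_nonneg (by linarith)]; ring

/-- `∮_{Γ_{θ,κ}} g(z) dz`, where `Γ_{θ,κ}` runs in along the ray `arg z = -θ`, counterclockwise
around the arc `|z| = κ`, and out along the ray `arg z = θ`. -/
noncomputable def sectorContourIntegral (θ κ : ℝ) (g : ℂ → ℂ) : ℂ :=
  -(∫ ρ in Ioi κ, g ((ρ : ℂ) * exp (-I * (θ : ℂ))) * exp (-I * (θ : ℂ)))
    + (∫ φ in (-θ)..θ, g ((κ : ℂ) * exp (I * (φ : ℂ))) * (I * (κ : ℂ) * exp (I * (φ : ℂ))))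
    + ∫ ρ in Ioi κ, g ((ρ : ℂ) * exp (I * (θ : ℂ))) * exp (I * (θ : ℂ))

lemma sectorContourIntegral_const_mul (θ κ : ℝ) (g : ℂ → ℂ) (c : ℂ) :
    sectorContourIntegral θ κ (fun z => c * g z) = c * sectorContourIntegral θ κ g := by
  simp only [sectorContourIntegral, mul_assoc, integral_const_mul,
    intervalIntegral.integral_const_mul]
  ring

lemma norm_sectorContourIntegral_le (hβ : 0 < β) (ht : 0 < t) (hM : 0 ≤ M)
    (hθ : θ ∈ Ioo (π / 2) π)
    (hg : ∀ z : ℂ, |arg z| ≤ θ → ‖g z‖ ≤ M * (‖z‖ ^ (β - 1) * Real.exp (t * z.re))) :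
    ‖sectorContourIntegral θ (1 / t) g‖
      ≤ M * (2 * ((-Real.cos θ) ^ (-β) * Real.Gamma β) + 2 * θ * Real.exp 1) * t ^ (-β) := by
  obtain ⟨hθ1, hθ2⟩ := hθ
  have hθ0 : 0 < θ := by linarith [pi_pos]
  have hcos : Real.cos θ < 0 := Real.cos_neg_of_pi_div_two_lt_of_lt hθ1 (by linarith)
  have hκ : 0 < 1 / t := by positivity
  have hray : (1 / (-t * Real.cos θ)) ^ β = (-Real.cos θ) ^ (-β) * t ^ (-β) := by
    rw [one_div, ← Real.rpow_neg_one, ← Real.rpow_mul (by nlinarith), neg_one_mul,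
      neg_mul, ← mul_neg, mul_comm, Real.mul_rpow (by linarith) ht.le]
  have harc : (1 / t) ^ β = t ^ (-β) := by
    rw [one_div, Real.inv_rpow ht.le, Real.rpow_neg ht.le]
  have hneg : -I * (θ : ℂ) = I * ((-θ : ℝ) : ℂ) := by push_cast; ring
  have h1 := norm_integral_ray_le hβ ht hM hθ2 hg (φ := -θ) (by rw [abs_neg, abs_of_pos hθ0])
    (by rwa [Real.cos_neg]) hκ.le
  have h2 := norm_integral_arc_le (κ := 1 / t) hM ht.le hθ0.le hθ2 hg hκ
  have h3 := norm_integral_ray_le hβ ht hM hθ2 hg (φ := θ) (abs_of_pos hθ0).le hcos hκ.le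
  rw [Real.cos_neg] at h1
  rw [mul_one_div_cancel ht.ne', harc] at h2
  rw [hray] at h1 h3
  rw [sectorContourIntegral, hneg]
  calc _ ≤ _ := norm_add₃_le.trans (by rw [norm_neg])
    _ ≤ _ := add_le_add (add_le_add h1 h2) h3
    _ = _ := by ring

end Contour

end SectorContour

open SectorContour in
theorem stmt14 (α : ℝ) (hα : α ∈ Set.Ioo (0:ℝ) 1) (m : ℕ) (θ : ℝ)
    (hθ : θ ∈ Set.Ioo (Real.pi / 2) (min Real.pi (Real.pi / α))) :
    ∃ c : ℝ, 0 < c ∧ ∀ lam t : ℝ, 0 < lam → 0 < t →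
      let κ : ℝ := 1 / t
      let f : ℂ → ℂ := fun z =>
        Complex.exp (z * (t : ℂ)) * z ^ ((((1 + (m : ℝ)) * α - 1 : ℝ)) : ℂ) *
          (z ^ ((α : ℝ) : ℂ) + (lam : ℂ))⁻¹ * (lam : ℂ) ^ (-(m : ℤ))
      let F : ℂ := (-1 : ℂ) ^ m / (2 * (Real.pi : ℂ) * Complex.I) *
        (-(∫ ρ in Set.Ioi κ, f ((ρ : ℂ) * Complex.exp (-Complex.I * (θ : ℂ))) *
              Complex.exp (-Complex.I * (θ : ℂ)))
          + (∫ φ in (-θ)..θ, f ((κ : ℂ) * Complex.exp (Complex.I * (φ : ℂ))) *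
              (Complex.I * (κ : ℂ) * Complex.exp (Complex.I * (φ : ℂ))))
          + ∫ ρ in Set.Ioi κ, f ((ρ : ℂ) * Complex.exp (Complex.I * (θ : ℂ))) *
              Complex.exp (Complex.I * (θ : ℂ)))
      ‖(lam : ℂ) ^ (m + 1) * F‖ ≤ c * t ^ (-((m : ℝ) + 1) * α) := by
  obtain ⟨hα0, -⟩ := hα
  obtain ⟨hθ1, hθ2⟩ := hθ
  have hθπ : θ < Real.pi := hθ2.trans_le (min_le_left _ _)
  have hαθ : α * θ < Real.pi := by
    have := hθ2.trans_le (min_le_right _ _)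
    rwa [lt_div_iff₀ hα0, mul_comm] at this
  have hθ0 : 0 < θ := by linarith [Real.pi_pos]
  have hsin : 0 < Real.sin (α * θ) := Real.sin_pos_of_pos_of_lt_pi (by positivity) hαθ
  set β := (1 + (m : ℝ)) * α
  have hβ : 0 < β := by positivity
  have hcos : 0 < -Real.cos θ := neg_pos.2 (Real.cos_neg_of_pi_div_two_lt_of_lt hθ1 (by linarith))
  have hΓ : 0 < Real.Gamma β := Real.Gamma_pos_of_pos hβ
  refine ⟨(2 * Real.pi)⁻¹ * ((Real.sin (α * θ))⁻¹ *
    (2 * ((-Real.cos θ) ^ (-β) * Real.Gamma β) + 2 * θ * Real.exp 1)), by positivity, ?_⟩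
  intro lam t hlam ht κ f F
  have hF : (lam : ℂ) ^ (m + 1) * F = (-1 : ℂ) ^ m / (2 * (Real.pi : ℂ) * Complex.I) *
      sectorContourIntegral θ κ (fun z => (lam : ℂ) ^ (m + 1) * f z) := by
    rw [sectorContourIntegral_const_mul]; simp only [F, sectorContourIntegral]; ring
  have hcoeff : ‖(-1 : ℂ) ^ m / (2 * (Real.pi : ℂ) * Complex.I)‖ = (2 * Real.pi)⁻¹ := by
    simp [abs_of_pos Real.pi_pos]
  have hcontour := norm_sectorContourIntegral_le hβ ht (by positivity) ⟨hθ1, hθπ⟩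
    (fun z hz => norm_resolvent_integrand_le m hα0 hθ0 hαθ hlam hz)
  rw [hF, norm_mul, hcoeff, show -((m : ℝ) + 1) * α = -β by ring, mul_assoc]
  exact mul_le_mul_of_nonneg_left hcontour (by positivity)
end
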